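/- arXiv:2402.10530 — 2 statements merged into one kernel-verified Lean document; each statement's English description precedes it below -/
import Mathlib

section
/- Let L be a subcomplex of a finite simplicial complex K such that every vertex of K not in L is dominated by some vertex of L. Then K strongly collapses onto L. -/
open Finset

attribute [local instance] Classical.propDecidable

noncomputable section

universe u v

/-- A finite abstract simplicial complex: a finite collection of nonempty finite sets
closed under taking nonempty subsets. -/
def IsComplex {V : Type u} (X : Finset (Finset V)) : Prop :=
  (∀ s ∈ X, s.Nonempty) ∧ ∀ s ∈ X, ∀ t : Finset V, t ⊆ s → t.Nonempty → t ∈ X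

/-- `s` is a maximal simplex (facet) of `X`. -/
def IsFacet {V : Type u} (X : Finset (Finset V)) (s : Finset V) : Prop :=
  s ∈ X ∧ ∀ t ∈ X, s ⊆ t → t = s

/-- An elementary collapse: `σ` is a free face of `X` whose unique maximal coface is `τ`,
and `Y` results from removing all simplices containing `σ`. -/
def ElemCollapse {V : Type u} (X Y : Finset (Finset V)) : Prop :=
  ∃ σ τ : Finset V, σ ∈ X ∧ IsFacet X τ ∧ σ ⊂ τ ∧
    (∀ t ∈ X, σ ⊆ t → t ⊆ τ) ∧ Y = X.filter (fun s => ¬ σ ⊆ s)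

/-- `X` simplicially collapses onto `Y`. -/
def Collapses {V : Type u} (X Y : Finset (Finset V)) : Prop :=
  Relation.ReflTransGen ElemCollapse X Y

/-- `X` is collapsible: it collapses to a single vertex. -/
def Collapsible {V : Type u} (X : Finset (Finset V)) : Prop :=
  ∃ v : V, Collapses X {{v}}

/-- The vertex `v` is dominated by the vertex `w ≠ v`: every facet containing `v`
contains `w`. -/
def Dominated {V : Type u} (X : Finset (Finset V)) (v w : V) : Prop :=
  w ≠ v ∧ ∀ s : Finset V, IsFacet X s → v ∈ s → w ∈ s

/-- An elementary strong collapse: deletion of a dominated vertex. -/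
def ElemStrongCollapse {V : Type u} (X Y : Finset (Finset V)) : Prop :=
  ∃ v w : V, {v} ∈ X ∧ Dominated X v w ∧ Y = X.filter (fun s => v ∉ s)

/-- `X` strongly collapses onto `Y`. -/
def StrongCollapses {V : Type u} (X Y : Finset (Finset V)) : Prop :=
  Relation.ReflTransGen ElemStrongCollapse X Y

/-- `X` is strongly collapsible: it strongly collapses to a single vertex. -/
def StrongCollapsible {V : Type u} (X : Finset (Finset V)) : Prop :=
  ∃ v : V, StrongCollapses X {{v}}

/-- The set of vertices of a complex. -/
def vertexSet {V : Type u} (X : Finset (Finset V)) : Finset V := X.sup id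

/-- The link of a simplex `σ` in `X`. -/
def linkC {V : Type u} (X : Finset (Finset V)) (σ : Finset V) : Finset (Finset V) :=
  X.filter (fun η => Disjoint η σ ∧ η ∪ σ ∈ X)

/-- The face-deletion of `σ` in `X`. -/
def faceDeletion {V : Type u} (X : Finset (Finset V)) (σ : Finset V) : Finset (Finset V) :=
  X.filter (fun η => ¬ σ ⊆ η)

/-- The simplicial join of two complexes (on disjoint vertex sets, via `Sum`). -/
def joinC {A : Type u} {B : Type v} (X : Finset (Finset A)) (Y : Finset (Finset B)) :
    Finset (Finset (A ⊕ B)) :=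
  (((insert (∅ : Finset A) X) ×ˢ (insert (∅ : Finset B) Y)).image
      (fun p => p.1.image Sum.inl ∪ p.2.image Sum.inr)).filter (·.Nonempty)

/-- The flag (clique) complex on the admissible vertices (those satisfying `P`) of a
finite type, with respect to a (reflexive, symmetric) compatibility relation `R`:
simplices are the nonempty finite sets of admissible vertices that are pairwise
compatible. -/
def cliqueComplex {A : Type u} [Fintype A] (P : A → Prop) (R : A → A → Prop) :
    Finset (Finset A) :=
  Finset.univ.filter (fun s : Finset A =>
    s.Nonempty ∧ (∀ a ∈ s, P a) ∧ ∀ a ∈ s, ∀ b ∈ s, R a b)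

/-- A complex is a cone if some vertex lies in every maximal simplex. -/
def IsCone {A : Type u} (X : Finset (Finset A)) : Prop :=
  ∃ v : A, {v} ∈ X ∧ ∀ s, IsFacet X s → v ∈ s

/-- Simplicial isomorphism (onto): `Y` is the image of `X` under an injection of
vertices. -/
def Isom {A : Type u} {B : Type v} (X : Finset (Finset A)) (Y : Finset (Finset B)) : Prop :=
  ∃ f : A → B, Function.Injective f ∧ Y = X.image (fun s => s.image f)

/-!
Delete the vertices outside `L` one at a time. A vertex `v ∉ L` is dominated by some `w ∈ L`,
so deleting it is an elementary strong collapse. Domination by `w ≠ v` survives the deletion of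
`v`, because every facet of the deletion is `t.erase v` for a facet `t` of the original complex.
Once no vertex outside `L` is left, fullness of `L` forces `K = L`.
-/

section StrongCollapse

variable {V : Type u} {X : Finset (Finset V)}

lemma mem_vertexSet {v : V} : v ∈ vertexSet X ↔ ∃ s ∈ X, v ∈ s := by
  simp [vertexSet, Finset.mem_sup]

lemma subset_vertexSet {s : Finset V} (hs : s ∈ X) : s ⊆ vertexSet X :=
  fun _ hv => mem_vertexSet.2 ⟨s, hs, hv⟩

lemma exists_isFacet_superset {s : Finset V} (hs : s ∈ X) : ∃ t, IsFacet X t ∧ s ⊆ t := by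
  obtain ⟨t, hst, htX, hmax⟩ := X.exists_le_maximal hs
  exact ⟨t, ⟨htX, fun u hu htu => (hmax hu htu).antisymm htu⟩, hst⟩

namespace IsComplex

lemma singleton_mem (hX : IsComplex X) {s : Finset V} (hs : s ∈ X) {v : V} (hv : v ∈ s) :
    {v} ∈ X :=
  hX.2 s hs {v} (singleton_subset_iff.2 hv) (singleton_nonempty v)

lemma filter_notMem (hX : IsComplex X) (v : V) : IsComplex (X.filter fun s => v ∉ s) := by
  refine ⟨fun s hs => hX.1 s (mem_filter.1 hs).1, fun s hs t hts ht => ?_⟩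
  rw [mem_filter] at hs ⊢
  exact ⟨hX.2 s hs.1 t hts ht, fun hvt => hs.2 (hts hvt)⟩

lemma exists_isFacet_erase_eq (hX : IsComplex X) {v : V} {s : Finset V}
    (hs : IsFacet (X.filter fun s => v ∉ s) s) : ∃ t, IsFacet X t ∧ t.erase v = s := by
  obtain ⟨hsX, hvs⟩ := mem_filter.1 hs.1
  obtain ⟨t, ht, hst⟩ := exists_isFacet_superset hsX
  have hs_erase : s ⊆ t.erase v := fun x hx => mem_erase.2 ⟨fun h => hvs (h ▸ hx), hst hx⟩
  have h_erase_mem : t.erase v ∈ X.filter fun s => v ∉ s :=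
    mem_filter.2 ⟨hX.2 t ht.1 _ (erase_subset v t) ((hX.1 s hsX).mono hs_erase),
      notMem_erase v t⟩
  exact ⟨t, ht, hs.2 _ h_erase_mem hs_erase⟩

end IsComplex

lemma Dominated.filter_notMem (hX : IsComplex X) {u w v : V} (h : Dominated X u w) (hwv : w ≠ v) :
    Dominated (X.filter fun s => v ∉ s) u w := by
  refine ⟨h.1, fun s hs hus => ?_⟩
  obtain ⟨t, ht, rfl⟩ := hX.exists_isFacet_erase_eq hs
  exact mem_erase.2 ⟨hwv, h.2 t ht (mem_of_mem_erase hus)⟩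

lemma eq_of_forall_singleton_mem {K L : Finset (Finset V)} (hK : IsComplex K) (hsub : L ⊆ K)
    (hfull : ∀ s ∈ K, s ⊆ vertexSet L → s ∈ L)
    (hvert : ∀ v : V, {v} ∈ K → {v} ∈ L) :
    K = L :=
  Subset.antisymm (fun s hs => hfull s hs fun v hv =>
    subset_vertexSet (hvert v (hK.singleton_mem hs hv)) (mem_singleton_self v)) hsub

end StrongCollapse

theorem stmt3_general {V : Type u} (K L : Finset (Finset V)) (hK : IsComplex K)
    (hsub : L ⊆ K)
    (hfull : ∀ s ∈ K, s ⊆ vertexSet L → s ∈ L)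
    (hdom : ∀ v : V, {v} ∈ K → {v} ∉ L → ∃ w, {w} ∈ L ∧ Dominated K v w) :
    StrongCollapses K L := by
  induction K using Finset.strongInduction with
  | H K ih =>
  by_cases hvert : ∀ v : V, {v} ∈ K → {v} ∈ L
  · exact eq_of_forall_singleton_mem hK hsub hfull hvert ▸ .refl
  push Not at hvert
  obtain ⟨v, hvK, hvL⟩ := hvert
  have hv_notMem : v ∉ vertexSet L := fun hv =>
    hvL (hfull {v} hvK (singleton_subset_iff.2 hv))
  obtain ⟨w, -, hvw⟩ := hdom v hvK hvL
  refine .head ⟨v, w, hvK, hvw, rfl⟩ (ih _ ?_ (hK.filter_notMem v) ?_ ?_ ?_)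
  · exact filter_ssubset.2 ⟨{v}, hvK, by simp⟩
  · exact fun s hs => mem_filter.2 ⟨hsub hs, fun hvs => hv_notMem (subset_vertexSet hs hvs)⟩
  · exact fun s hs => hfull s (filter_subset _ K hs)
  · intro u hu huL
    obtain ⟨w', hw'L, hw'⟩ := hdom u (filter_subset _ K hu) huL
    have hw'v : w' ≠ v := by
      rintro rfl
      exact hv_notMem (subset_vertexSet hw'L (mem_singleton_self _))
    exact ⟨w', hw'L, hw'.filter_notMem hK hw'v⟩

/-- Barmak–Minian. If every vertex of `K` which is not in the full
subcomplex `L` is dominated by some vertex of `L`, then `K` strongly collapses onto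
`L`. -/
theorem stmt3 {V : Type u} (K L : Finset (Finset V)) (hK : IsComplex K)
    (hL : IsComplex L) (hsub : L ⊆ K)
    (hfull : ∀ s ∈ K, s ⊆ vertexSet L → s ∈ L)
    (hdom : ∀ v : V, {v} ∈ K → {v} ∉ L → ∃ w, {w} ∈ L ∧ Dominated K v w) :
    StrongCollapses K L :=
  stmt3_general K L hK hsub hfull hdom
end
end

section
/- For n ≥ 1, the full arc complex of a non-orientable crown with n boundary vertices simplicially collapses onto its inner arc complex; consequently it is collapsible. -/
open Finset

attribute [local instance] Classical.propDecidable

noncomputable section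

universe u v

/-! ### A combinatorial model of the arc complex of a non-orientable crown `M(n)`
(a Möbius strip with `n` marked boundary vertices, labelled by `Fin n` in cyclic
order). -/

/-- `k` lies in the closed cyclic interval from `i` to `j` (counterclockwise); by
convention the interval is the full circle when `i = j`. -/
def btwn {n : ℕ} (i j k : Fin n) : Prop :=
  if i = j then True
  else if i.val ≤ j.val then i.val ≤ k.val ∧ k.val ≤ j.val
  else i.val ≤ k.val ∨ k.val ≤ j.val

/-- `k` lies strictly inside the cyclic interval from `i` to `j`. -/
def sbtwn {n : ℕ} (i j k : Fin n) : Prop := btwn i j k ∧ k ≠ i ∧ k ≠ j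

/-- Disjointness (compatibility) of two boundary arcs (b-arcs), each encoded by the
ordered pair `(i, j)` of its endpoints, the polygonal side being the cyclic interval
`[i..j]` (the pair `(i, i)` encodes the maximal b-arc `M i`, whose polygonal side is
the whole circle): the polygonal sides must be nested (with no endpoint of the outer
arc strictly inside the inner interval) or have disjoint interiors. -/
def bbDisj {n : ℕ} (p q : Fin n × Fin n) : Prop :=
  p = q ∨
  ((∀ k, btwn p.1 p.2 k → btwn q.1 q.2 k) ∧ ¬ sbtwn p.1 p.2 q.1 ∧ ¬ sbtwn p.1 p.2 q.2) ∨
  ((∀ k, btwn q.1 q.2 k → btwn p.1 p.2 k) ∧ ¬ sbtwn q.1 q.2 p.1 ∧ ¬ sbtwn q.1 q.2 p.2) ∨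
  ((∀ k, ¬ (sbtwn p.1 p.2 k ∧ btwn q.1 q.2 k)) ∧ ∀ k, ¬ (btwn p.1 p.2 k ∧ sbtwn q.1 q.2 k))

/-- Disjointness of two c-arcs of the Möbius crown.  A c-arc is encoded by the pair
`(i, j)` of its endpoints with `i ≤ j` (so `(i, i)` is the maximal c-arc `L i`).
Cutting along the c-arc `(p₁, p₂)` produces a strip whose two sides carry the closed
intervals `[p₁..p₂]` and its closed complement; a c-arc `(q₁, q₂)` is disjoint from it
iff one of its endpoints lies in the first closed interval and the other in the
second. -/
def cDisjMob {n : ℕ} (p q : Fin n × Fin n) : Prop :=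
  p = q ∨
  (p.1 ≤ q.1 ∧ q.1 ≤ p.2 ∧ (q.2 ≤ p.1 ∨ p.2 ≤ q.2)) ∨
  (p.1 ≤ q.2 ∧ q.2 ≤ p.2 ∧ (q.1 ≤ p.1 ∨ p.2 ≤ q.1))

/-- Arcs of the non-orientable crown `M(n)`: `Sum.inl (i, j)` (with `i ≤ j`) is the
c-arc joining `i` and `j` (the maximal c-arc `L i` when `i = j`); `Sum.inr (i, j)` is
the b-arc with endpoints `i, j` whose polygonal side is the cyclic interval `[i..j]`
(the maximal b-arc `M i` when `i = j`). -/
abbrev MobArc (n : ℕ) := (Fin n × Fin n) ⊕ (Fin n × Fin n)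

/-- Disjointness (compatibility, up to homotopy) of arcs of the non-orientable crown:
a c-arc is disjoint from a b-arc iff neither of its endpoints lies strictly inside the
polygonal side of the b-arc. -/
def mobDisj {n : ℕ} : MobArc n → MobArc n → Prop
  | Sum.inl p, Sum.inl q => cDisjMob p q
  | Sum.inl p, Sum.inr q => ¬ sbtwn q.1 q.2 p.1 ∧ ¬ sbtwn q.1 q.2 p.2
  | Sum.inr q, Sum.inl p => ¬ sbtwn q.1 q.2 p.1 ∧ ¬ sbtwn q.1 q.2 p.2
  | Sum.inr p, Sum.inr q => bbDisj p q

/-- Validity: c-arcs are encoded with `i ≤ j`; the maximal b-arcs `M i` are nontrivial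
only when `n ≥ 2`. -/
def mobValid {n : ℕ} : MobArc n → Prop
  | Sum.inl p => p.1 ≤ p.2
  | Sum.inr p => p.1 ≠ p.2 ∨ 2 ≤ n

/-- The full arc complex of the non-orientable crown `M(n)`. -/
def mobComplex (n : ℕ) : Finset (Finset (MobArc n)) :=
  cliqueComplex mobValid mobDisj

/-- The inner arc complex of `M(n)`, the subcomplex spanned by the c-arcs. -/
def innerMobComplex (n : ℕ) : Finset (Finset (MobArc n)) :=
  (mobComplex n).filter (fun s => ∀ a ∈ s, a.isLeft = true)

/-- The inner arc complex of `M(n)`, directly as a flag complex on c-arcs. -/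
def innerMob (n : ℕ) : Finset (Finset (Fin n × Fin n)) :=
  cliqueComplex (fun p => p.1 ≤ p.2) cDisjMob


/-!
The b-arc `edgeArc` cutting off the boundary edge between the vertices `n - 1` and `0` is
disjoint from every arc. Hence it dominates every other b-arc, and deleting those one at a
time collapses the full arc complex onto the cone with apex `edgeArc` over the inner arc
complex `L`. The inner arc complex itself is collapsible: deleting the c-arcs `(i, j)`,
`i ≤ j`, in lexicographic order, each is dominated by the c-arc `(j, n - 1)` until only
`(n - 1, n - 1)` is left. This collapse of `L` to a vertex `t` lifts to a collapse of
`L ∪ edgeArc * L` onto `L ∪ edgeArc * t`, and removing the free face `edgeArc` leaves `L`.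
For `n = 1` there are no b-arcs at all.
-/

section Collapse

variable {V : Type u} {X Y : Finset (Finset V)}

lemma ElemCollapse.subset (h : ElemCollapse X Y) : Y ⊆ X := by
  obtain ⟨_, _, _, _, _, _, rfl⟩ := h
  exact filter_subset _ _

lemma Collapses.subset (h : Collapses X Y) : Y ⊆ X := by
  induction h with
  | refl => exact Subset.rfl
  | tail _ hbc ih => exact hbc.subset.trans ih

lemma IsComplex.filter_not_superset (hX : IsComplex X) (σ : Finset V) :
    IsComplex (X.filter (fun s => ¬ σ ⊆ s)) := by
  refine ⟨fun s hs => hX.1 s (mem_filter.1 hs).1, fun s hs t hts ht => ?_⟩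
  obtain ⟨hsX, hσs⟩ := mem_filter.1 hs
  exact mem_filter.2 ⟨hX.2 s hsX t hts ht, fun hσt => hσs (hσt.trans hts)⟩

variable {v w : V}

lemma elemCollapse_of_maximal (hX : IsComplex X) (hwv : w ≠ v)
    (hins : ∀ s ∈ X, v ∈ s → insert w s ∈ X) {σ : Finset V}
    (hσ : Maximal (fun s => s ∈ X ∧ v ∈ s ∧ w ∉ s) σ) :
    ElemCollapse X (X.filter (fun s => ¬ σ ⊆ s)) := by
  obtain ⟨⟨hσX, hvσ, hwσ⟩, hmax⟩ := hσ
  have hcoface : ∀ t ∈ X, σ ⊆ t → t ⊆ insert w σ := by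
    intro t ht hσt
    have hvt : v ∈ t.erase w := mem_erase.2 ⟨hwv.symm, hσt hvσ⟩
    have hσt' : σ ⊆ t.erase w := fun x hx =>
      mem_erase.2 ⟨fun h => hwσ (h ▸ hx), hσt hx⟩
    have heq : t.erase w = σ := le_antisymm
      (hmax ⟨hX.2 t ht _ (erase_subset w t) ⟨v, hvt⟩, hvt, notMem_erase w t⟩ hσt') hσt'
    exact heq ▸ insert_erase_subset w t
  have hτX : insert w σ ∈ X := hins σ hσX hvσ
  refine ⟨σ, insert w σ, hσX, ⟨hτX, fun t ht hτt => ?_⟩, ssubset_insert hwσ, hcoface, rfl⟩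
  exact (hcoface t ht ((subset_insert w σ).trans hτt)).antisymm hτt

/-- The hypothesis on `insert w` says that `v` is dominated by `w` (cf. `Dominated`); the
simplices containing `v` but not `w` are then removed as free faces, largest first. -/
lemma collapses_filter_notMem_of_insert_mem (hX : IsComplex X) (hwv : w ≠ v)
    (hins : ∀ s ∈ X, v ∈ s → insert w s ∈ X) :
    Collapses X (X.filter (fun s => v ∉ s)) := by
  induction hk : #(X.filter (fun s => v ∈ s)) using Nat.strong_induction_on generalizing X with
  | _ k ih =>
  by_cases hv : ∃ s ∈ X, v ∈ s
  · obtain ⟨s, hsX, hvs⟩ := hv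
    have hvs' : v ∈ s.erase w := mem_erase.2 ⟨hwv.symm, hvs⟩
    obtain ⟨σ, hσ⟩ := (X.filter (fun s => v ∈ s ∧ w ∉ s)).exists_maximal
      ⟨s.erase w, mem_filter.2 ⟨hX.2 s hsX _ (erase_subset w s) ⟨v, hvs'⟩, hvs',
        notMem_erase w s⟩⟩
    simp only [mem_filter] at hσ
    obtain ⟨hσX, hvσ, hwσ⟩ := hσ.1
    set X' := X.filter (fun s => ¬ σ ⊆ s)
    have hins' : ∀ s ∈ X', v ∈ s → insert w s ∈ X' := by
      intro s hs hvs
      obtain ⟨hsX, hσs⟩ := mem_filter.1 hs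
      exact mem_filter.2 ⟨hins s hsX hvs, fun h => hσs ((subset_insert_iff_of_notMem hwσ).1 h)⟩
    have hlt : #(X'.filter (fun s => v ∈ s)) < k := by
      refine hk ▸ card_lt_card ⟨monotone_filter_left _ (filter_subset _ _), fun h => ?_⟩
      have := h (mem_filter.2 ⟨hσX, hvσ⟩)
      exact (mem_filter.1 (mem_filter.1 this).1).2 Subset.rfl
    have hsame : X'.filter (fun s => v ∉ s) = X.filter (fun s => v ∉ s) := by
      rw [filter_filter]
      exact filter_congr fun s _ => ⟨And.right, fun h => ⟨fun hσs => h (hσs hvσ), h⟩⟩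
    exact .head (elemCollapse_of_maximal hX hwv hins hσ) (hsame ▸ ih _ hlt
      (hX.filter_not_superset σ) hins' rfl)
  · push Not at hv
    rw [filter_true_of_mem hv]
    exact .refl

end Collapse

section Cone

variable {V : Type u}

def unionCone (a : V) (L K : Finset (Finset V)) : Finset (Finset V) :=
  L ∪ {{a}} ∪ K.image (insert a)

variable {a : V} {L K K' : Finset (Finset V)}

lemma mem_unionCone {t : Finset V} :
    t ∈ unionCone a L K ↔ t ∈ L ∨ t = {a} ∨ ∃ u ∈ K, insert a u = t := by
  simp only [unionCone, mem_union, mem_singleton, mem_image, or_assoc]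

variable (hL : ∀ s ∈ L, a ∉ s ∧ s.Nonempty)
include hL

lemma insert_not_subset_of_mem_union {σ t : Finset V} (hσ : σ ∈ L) (ht : t ∈ L ∪ {{a}}) :
    ¬ insert a σ ⊆ t := by
  intro h
  rcases mem_union.1 ht with ht | ht
  · exact (hL t ht).1 (h (mem_insert_self a σ))
  · obtain ⟨x, hx⟩ := (hL σ hσ).2
    have hxa : x = a := mem_singleton.1 (mem_singleton.1 ht ▸ h (mem_insert_of_mem hx))
    exact (hL σ hσ).1 (hxa ▸ hx)

lemma insert_subset_iff_of_mem_unionCone {σ t : Finset V} (hσ : σ ∈ L)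
    (ht : t ∈ unionCone a L K) : insert a σ ⊆ t ↔ ∃ u ∈ K, insert a u = t ∧ σ ⊆ u := by
  refine ⟨fun h => ?_, fun ⟨u, _, hut, hσu⟩ => hut ▸ insert_subset_insert a hσu⟩
  rcases mem_union.1 ht with ht | ht
  · exact absurd h (insert_not_subset_of_mem_union hL hσ ht)
  · obtain ⟨u, hu, rfl⟩ := mem_image.1 ht
    exact ⟨u, hu, rfl, (insert_subset_insert_iff (hL σ hσ).1).1 h⟩

lemma ElemCollapse.unionCone (hK : K ⊆ L) (h : ElemCollapse K K') :
    ElemCollapse (unionCone a L K) (unionCone a L K') := by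
  obtain ⟨σ, τ, hσ, ⟨hτ, hτmax⟩, hστ, hcoface, rfl⟩ := h
  have haσ := (hL σ (hK hσ)).1
  have haτ := (hL τ (hK hτ)).1
  have key := fun t (ht : t ∈ _root_.unionCone a L K) =>
    insert_subset_iff_of_mem_unionCone hL (hK hσ) ht
  have hmem : ∀ u ∈ K, insert a u ∈ _root_.unionCone a L K := fun u hu =>
    mem_unionCone.2 (Or.inr (Or.inr ⟨u, hu, rfl⟩))
  refine ⟨insert a σ, insert a τ, hmem σ hσ, ⟨hmem τ hτ, fun t ht hτt => ?_⟩,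
    ⟨insert_subset_insert a hστ.1, fun h => hστ.2 ((insert_subset_insert_iff haτ).1 h)⟩,
    fun t ht hσt => ?_, ?_⟩
  · obtain ⟨u, hu, rfl, -⟩ := (key t ht).1 ((insert_subset_insert a hστ.1).trans hτt)
    rw [hτmax u hu ((insert_subset_insert_iff haτ).1 hτt)]
  · obtain ⟨u, hu, rfl, hσu⟩ := (key t ht).1 hσt
    exact insert_subset_insert a (hcoface u hu hσu)
  · rw [_root_.unionCone, _root_.unionCone, filter_union, filter_image,
      filter_true_of_mem fun s hs => insert_not_subset_of_mem_union hL (hK hσ) hs]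
    congr 2
    exact filter_congr fun u _ => by rw [insert_subset_insert_iff haσ]

lemma Collapses.unionCone (hK : K ⊆ L) (h : Collapses K K') :
    Collapses (unionCone a L K) (unionCone a L K') := by
  induction h with
  | refl => exact .refl
  | tail hab hbc ih => exact ih.tail (hbc.unionCone hL ((Collapses.subset hab).trans hK))

lemma elemCollapse_unionCone_singleton {t : V} (ht : {t} ∈ L) :
    ElemCollapse (unionCone a L {{t}}) L := by
  have hat : a ≠ t := fun h => (hL {t} ht).1 (h ▸ mem_singleton_self a)
  refine ⟨{a}, insert a {t}, mem_unionCone.2 (Or.inr (Or.inl rfl)),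
    ⟨mem_unionCone.2 (Or.inr (Or.inr ⟨{t}, mem_singleton_self _, rfl⟩)), fun s hs hts => ?_⟩,
    ssubset_iff.2 ⟨t, by simpa using hat.symm, by simp [insert_subset_iff]⟩,
    fun s hs has => ?_, ?_⟩
  · obtain ⟨u, hu, rfl, -⟩ := (insert_subset_iff_of_mem_unionCone hL ht hs).1 hts
    rw [mem_singleton.1 hu]
  · rcases mem_unionCone.1 hs with hs | rfl | ⟨u, hu, rfl⟩
    · exact absurd (has (mem_singleton_self a)) (hL s hs).1
    · exact singleton_subset_iff.2 (mem_insert_self a {t})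
    · rw [mem_singleton.1 hu]
  · rw [unionCone, filter_union, filter_union, filter_singleton, filter_image,
      filter_true_of_mem fun s hs => by simpa using (hL s hs).1]
    simp

lemma collapses_unionCone_self {t : V} (h : Collapses L {{t}}) :
    Collapses (unionCone a L L) L :=
  (h.unionCone hL Subset.rfl).tail
    (elemCollapse_unionCone_singleton hL (h.subset (mem_singleton_self _)))

end Cone

section Clique

variable {A : Type u} [Fintype A] {P Q : A → Prop} {R : A → A → Prop}

@[simp]
lemma mem_cliqueComplex {s : Finset A} :
    s ∈ cliqueComplex P R ↔ s.Nonempty ∧ (∀ a ∈ s, P a) ∧ ∀ a ∈ s, ∀ b ∈ s, R a b := by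
  simp [cliqueComplex]

lemma cliqueComplex_congr (h : ∀ a, P a ↔ Q a) : cliqueComplex P R = cliqueComplex Q R := by
  rw [funext fun a => propext (h a)]

lemma cliqueComplex_eq_singleton {v : A} (hRv : R v v) : cliqueComplex (· = v) R = {{v}} := by
  ext s
  simp only [mem_cliqueComplex, mem_singleton]
  refine ⟨fun ⟨hs, hP, _⟩ => eq_singleton_iff_unique_mem.2 ⟨?_, hP⟩, ?_⟩
  · obtain ⟨a, ha⟩ := hs
    exact hP a ha ▸ ha
  · rintro rfl
    simp [hRv]

lemma isComplex_cliqueComplex : IsComplex (cliqueComplex P R) :=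
  ⟨fun s hs => (mem_cliqueComplex.1 hs).1, fun s hs t hts ht => by
    obtain ⟨-, hP, hR⟩ := mem_cliqueComplex.1 hs
    exact mem_cliqueComplex.2 ⟨ht, fun a ha => hP a (hts ha),
      fun a ha b hb => hR a (hts ha) b (hts hb)⟩⟩

lemma cliqueComplex_filter_forall [DecidablePred fun s : Finset A => ∀ a ∈ s, Q a] :
    (cliqueComplex P R).filter (fun s => ∀ a ∈ s, Q a) = cliqueComplex (fun a => P a ∧ Q a) R := by
  ext s
  simp only [mem_filter, mem_cliqueComplex, forall_and]
  tauto

lemma cliqueComplex_filter_notMem (v : A) :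
    (cliqueComplex P R).filter (fun s => v ∉ s) = cliqueComplex (fun a => P a ∧ a ≠ v) R := by
  ext s
  simp only [mem_filter, mem_cliqueComplex, forall_and]
  exact ⟨fun ⟨⟨hs, hP, hR⟩, hv⟩ => ⟨hs, ⟨hP, fun a ha hav => hv (hav ▸ ha)⟩, hR⟩,
    fun ⟨hs, ⟨hP, hv⟩, hR⟩ => ⟨⟨hs, hP, hR⟩, fun h => hv v h rfl⟩⟩

lemma insert_mem_cliqueComplex {s : Finset A} {w : A} (hs : s ∈ cliqueComplex P R) (hPw : P w)
    (hRw : R w w) (hsw : ∀ u ∈ s, R u w ∧ R w u) : insert w s ∈ cliqueComplex P R := by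
  obtain ⟨-, hP, hR⟩ := mem_cliqueComplex.1 hs
  simp only [mem_cliqueComplex, insert_nonempty, forall_mem_insert, true_and]
  exact ⟨⟨hPw, hP⟩, ⟨hRw, fun b hb => (hsw b hb).2⟩, fun a ha => ⟨(hsw a ha).1, hR a ha⟩⟩

lemma cliqueComplex_collapses_delete {v w : A} (hwv : w ≠ v) (hPw : P w) (hRw : R w w)
    (hdom : ∀ u, P u → R u v → R v u → R u w ∧ R w u) :
    Collapses (cliqueComplex P R) (cliqueComplex (fun a => P a ∧ a ≠ v) R) := by
  rw [← cliqueComplex_filter_notMem]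
  refine collapses_filter_notMem_of_insert_mem isComplex_cliqueComplex hwv fun s hs hvs => ?_
  obtain ⟨-, hP, hR⟩ := mem_cliqueComplex.1 hs
  exact insert_mem_cliqueComplex hs hPw hRw fun u hu =>
    hdom u (hP u hu) (hR u hu v hvs) (hR v hvs u hu)

/-- The vertices outside `Q` are deleted in increasing order of the rank `r`. -/
lemma cliqueComplex_collapses_of_dominated {β : Type v} [LinearOrder β] (r : A → β)
    (hQP : ∀ a, Q a → P a)
    (hdom : ∀ v, P v → ¬ Q v → ∃ w, r v < r w ∧ P w ∧ R w w ∧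
      ∀ u, P u → (Q u ∨ r v ≤ r u) → R u v → R v u → R u w ∧ R w u) :
    Collapses (cliqueComplex P R) (cliqueComplex Q R) := by
  induction hk : {a | P a ∧ ¬ Q a}.ncard using Nat.strong_induction_on generalizing P with
  | _ k ih =>
  obtain hempty | ⟨v, hv, hvmin⟩ := {a | P a ∧ ¬ Q a}.eq_empty_or_nonempty.imp id
    (Set.exists_min_image _ r (Set.toFinite _))
  · rw [cliqueComplex_congr fun a => ⟨fun hPa => by_contra fun hQa =>
      hempty.subset ⟨hPa, hQa⟩, hQP a⟩]
    exact .refl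
  obtain ⟨w, hvw, hPw, hRw, hw⟩ := hdom v hv.1 hv.2
  have hmin : ∀ u, P u → (Q u ∨ r v ≤ r u) := fun u hu =>
    (em (Q u)).imp id fun hQu => hvmin u ⟨hu, hQu⟩
  refine (cliqueComplex_collapses_delete (ne_of_apply_ne r hvw.ne') hPw hRw
    fun u hu => hw u hu (hmin u hu)).trans (ih _ ?_ (fun a hQa => ⟨hQP a hQa, ?_⟩) ?_ rfl)
  · exact hk ▸ Set.ncard_lt_ncard ⟨fun a ha => ⟨ha.1.1, ha.2⟩, fun h => (h hv).1.2 rfl⟩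
  · rintro rfl
    exact hv.2 hQa
  · intro v' hv' hQv'
    obtain ⟨w', hvw', hPw', hRw', hw'⟩ := hdom v' hv'.1 hQv'
    refine ⟨w', hvw', ⟨hPw', ?_⟩, hRw', fun u hu => hw' u hu.1⟩
    rintro rfl
    exact (hvmin v' ⟨hv'.1, hQv'⟩).not_gt hvw'

lemma cliqueComplex_eq_unionCone {w : A} (hPw : P w) (hRw : R w w)
    (hcone : ∀ u, P u → R u w ∧ R w u) :
    cliqueComplex P R = unionCone w (cliqueComplex (fun a => P a ∧ a ≠ w) R)
      (cliqueComplex (fun a => P a ∧ a ≠ w) R) := by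
  have hw : {w} ∈ cliqueComplex P R := by simp [hPw, hRw]
  ext s
  rw [mem_unionCone, ← cliqueComplex_filter_notMem]
  simp only [mem_filter]
  constructor
  · intro hs
    by_cases hws : w ∈ s
    · by_cases hsw : s = {w}
      · exact Or.inr (Or.inl hsw)
      · refine Or.inr (Or.inr ⟨s.erase w, ⟨isComplex_cliqueComplex.2 s hs _ (erase_subset w s)
          ((erase_nonempty hws).2 ((nontrivial_iff_ne_singleton hws).2 hsw)), notMem_erase w s⟩,
          insert_erase hws⟩)
    · exact Or.inl ⟨hs, hws⟩
  · rintro (⟨hs, -⟩ | rfl | ⟨u, ⟨hu, -⟩, rfl⟩)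
    · exact hs
    · exact hw
    · exact insert_mem_cliqueComplex hu hPw hRw fun a ha =>
        hcone a ((mem_cliqueComplex.1 hu).2.1 a ha)

end Clique

section Crown

variable {n m : ℕ}

lemma btwn_iff {i j k : Fin n} :
    btwn i j k ↔ i = j ∨ (i ≤ j ∧ i ≤ k ∧ k ≤ j) ∨ (j < i ∧ (i ≤ k ∨ k ≤ j)) := by
  simp only [btwn, Fin.ext_iff, Fin.le_def, Fin.lt_def]
  split_ifs <;> (try rw [true_iff]) <;> omega

lemma btwn_last_zero_iff {k : Fin (m + 1)} :
    btwn (Fin.last m) 0 k ↔ k = Fin.last m ∨ k = 0 := by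
  simp only [btwn_iff, Fin.ext_iff, Fin.le_def, Fin.lt_def, Fin.val_last, Fin.coe_ofNat_eq_mod,
    Nat.zero_mod]
  omega

lemma not_sbtwn_last_zero (k : Fin (m + 1)) : ¬ sbtwn (Fin.last m) 0 k := by
  rw [sbtwn, btwn_last_zero_iff]
  tauto

lemma bbDisj_comm {p q : Fin n × Fin n} (h : bbDisj p q) : bbDisj q p := by
  rcases h with rfl | h | h | ⟨h₁, h₂⟩
  exacts [Or.inl rfl, Or.inr (Or.inr (Or.inl h)), Or.inr (Or.inl h),
    Or.inr (Or.inr (Or.inr ⟨fun k hk => h₂ k hk.symm, fun k hk => h₁ k hk.symm⟩))]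

/-- Either the polygonal side `{last m, 0}` lies in that of `q`, or it meets it at most in
endpoints of `q`. -/
lemma bbDisj_last_zero (q : Fin (m + 1) × Fin (m + 1)) : bbDisj (Fin.last m, 0) q := by
  by_cases hq : btwn q.1 q.2 (Fin.last m) ∧ btwn q.1 q.2 0
  · refine Or.inr (Or.inl ⟨fun k hk => ?_, not_sbtwn_last_zero _, not_sbtwn_last_zero _⟩)
    rcases btwn_last_zero_iff.1 hk with rfl | rfl
    exacts [hq.1, hq.2]
  · refine Or.inr (Or.inr (Or.inr ⟨fun k hk => not_sbtwn_last_zero k hk.1, ?_⟩))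
    rintro k ⟨hk, hqk⟩
    rcases btwn_last_zero_iff.1 hk with rfl | rfl <;>
    simp only [sbtwn, btwn_iff, ne_eq, Fin.ext_iff, Fin.le_def, Fin.lt_def, Fin.val_last,
      Fin.coe_ofNat_eq_mod, Nat.zero_mod] at hq hqk <;>
    omega

lemma cDisjMob_last_of_toLex_le {i j a b : Fin (m + 1)} (hij : i ≤ j)
    (hle : toLex (i, j) ≤ toLex (a, b)) (h : cDisjMob (a, b) (i, j)) :
    cDisjMob (a, b) (j, Fin.last m) ∧ cDisjMob (j, Fin.last m) (a, b) := by
  simp only [cDisjMob, Prod.mk.injEq, Fin.ext_iff, Fin.le_def, Prod.Lex.toLex_le_toLex,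
    Fin.lt_def, Fin.val_last] at *
  omega

/-- The b-arc cutting off the boundary edge from `last m` to `0`. -/
abbrev edgeArc (m : ℕ) : MobArc (m + 1) := Sum.inr (Fin.last m, 0)

lemma mobDisj_edgeArc (a : MobArc (m + 1)) : mobDisj a (edgeArc m) ∧ mobDisj (edgeArc m) a := by
  cases a with
  | inl p => exact ⟨⟨not_sbtwn_last_zero _, not_sbtwn_last_zero _⟩,
      ⟨not_sbtwn_last_zero _, not_sbtwn_last_zero _⟩⟩
  | inr q => exact ⟨bbDisj_comm (bbDisj_last_zero q), bbDisj_last_zero q⟩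

lemma mobValid_edgeArc (hm : 1 ≤ m) : mobValid (edgeArc m) := Or.inr (by omega)

lemma innerMobComplex_eq :
    innerMobComplex n = cliqueComplex (fun a => mobValid a ∧ a.isLeft = true) mobDisj :=
  cliqueComplex_filter_forall

lemma mobComplex_eq_innerMobComplex_one : mobComplex 1 = innerMobComplex 1 := by
  rw [innerMobComplex_eq]
  refine cliqueComplex_congr fun a => ⟨fun ha => ⟨ha, ?_⟩, And.left⟩
  rcases a with p | ⟨i, j⟩
  · rfl
  · exact absurd ha (by simp [mobValid, Subsingleton.elim i j])

lemma innerMobComplex_collapses (m : ℕ) :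
    Collapses (innerMobComplex (m + 1)) {{Sum.inl (Fin.last m, Fin.last m)}} := by
  rw [innerMobComplex_eq, ← cliqueComplex_eq_singleton (R := mobDisj)
    (v := Sum.inl (Fin.last m, Fin.last m)) (Or.inl rfl)]
  refine cliqueComplex_collapses_of_dominated (fun a => toLex (a.elim id id))
    (fun a ha => ha ▸ ⟨le_rfl, rfl⟩) ?_
  rintro (⟨i, j⟩ | q) ⟨hij, hv⟩ hvT
  · change i ≤ j at hij
    refine ⟨Sum.inl (j, Fin.last m), ?_, ⟨Fin.le_last j, rfl⟩, Or.inl rfl, ?_⟩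
    · simp only [Sum.elim_inl, id, Prod.Lex.toLex_lt_toLex, Sum.inl.injEq, Prod.mk.injEq,
        Fin.ext_iff, Fin.lt_def, Fin.le_def, Fin.val_last] at hvT hij ⊢
      omega
    · rintro (⟨a, b⟩ | q) ⟨-, hu⟩ hle h -
      · refine cDisjMob_last_of_toLex_le hij (hle.elim (fun h => ?_) id) h
        simp only [Sum.inl.injEq, Prod.mk.injEq] at h
        simp only [h, Prod.Lex.toLex_le_toLex, Fin.ext_iff, Fin.lt_def,
          Fin.le_def, Fin.val_last]
        omega
      · exact absurd hu (by simp)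
  · exact absurd hv (by simp)

/-- The cone with apex `edgeArc m` over the inner arc complex. -/
def edgeCone (m : ℕ) : Finset (Finset (MobArc (m + 1))) :=
  cliqueComplex (fun a => mobValid a ∧ (a.isLeft = true ∨ a = edgeArc m)) mobDisj

lemma mobComplex_collapses_edgeCone (hm : 1 ≤ m) :
    Collapses (mobComplex (m + 1)) (edgeCone m) := by
  unfold mobComplex edgeCone
  refine cliqueComplex_collapses_of_dominated
    (fun a => decide (a.isLeft = true ∨ a = edgeArc m)) (fun _ h => h.1)
    fun _ hv hvQ => ⟨edgeArc m, ?_, mobValid_edgeArc hm, Or.inl rfl,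
      fun u _ _ _ _ => mobDisj_edgeArc u⟩
  rw [decide_eq_false fun h => hvQ ⟨hv, h⟩, decide_eq_true (Or.inr rfl)]
  exact Bool.false_lt_true

lemma edgeCone_collapses_innerMobComplex (hm : 1 ≤ m) {t : MobArc (m + 1)}
    (h : Collapses (innerMobComplex (m + 1)) {{t}}) :
    Collapses (edgeCone m) (innerMobComplex (m + 1)) := by
  have hdel : cliqueComplex (fun a => (mobValid a ∧ (a.isLeft = true ∨ a = edgeArc m)) ∧
      a ≠ edgeArc m) mobDisj = innerMobComplex (m + 1) := by
    rw [innerMobComplex_eq]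
    exact cliqueComplex_congr fun a => by cases a <;> simp
  rw [edgeCone, cliqueComplex_eq_unionCone
    (P := fun a => mobValid a ∧ (a.isLeft = true ∨ a = edgeArc m))
    ⟨mobValid_edgeArc hm, Or.inr rfl⟩ (Or.inl rfl) fun u _ => mobDisj_edgeArc u, hdel]
  refine collapses_unionCone_self (fun s hs => ?_) h
  rw [innerMobComplex_eq, mem_cliqueComplex] at hs
  exact ⟨fun he => by simpa using (hs.2.1 _ he).2, hs.1⟩

end Crown

/-- For `n ≥ 1`, the full arc complex of the non-orientable crown
`M(n)` simplicially collapses onto its inner arc complex; consequently it is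
collapsible. -/
theorem stmt16 (n : ℕ) (hn : 1 ≤ n) :
    Collapses (mobComplex n) (innerMobComplex n) ∧
    Collapsible (mobComplex n) := by
  obtain ⟨m, rfl⟩ := Nat.exists_eq_add_of_le' hn
  have hinner := innerMobComplex_collapses m
  have hfull : Collapses (mobComplex (m + 1)) (innerMobComplex (m + 1)) := by
    rcases Nat.eq_zero_or_pos m with rfl | hm
    · exact mobComplex_eq_innerMobComplex_one ▸ .refl
    · exact (mobComplex_collapses_edgeCone hm).trans
        (edgeCone_collapses_innerMobComplex hm hinner)
  exact ⟨hfull, _, hfull.trans hinner⟩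
end
end
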